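/- Let α be real, and define the Størmer state σ_α on ℂ³ ⊗ ℂ³ (a matrix indexed by Fin 3 × Fin 3) by σ_α = (2/7)|ψ₊⟩⟨ψ₊| + (α/7)σ₊ + ((5−α)/7)σ₋, where ψ₊ = (|00⟩+|11⟩+|22⟩)/√3, σ₊ = (|01⟩⟨01| + |12⟩⟨12| + |20⟩⟨20|)/3 and σ₋ = (|10⟩⟨10| + |21⟩⟨21| + |02⟩⟨02|)/3. Then: (i) both partial traces of σ_α equal (1/3)·I₃, so each one-qutrit reduced purity is 1/3; (ii) tr σ_α² = (2α² − 10α + 37)/147; (iii) tr σ_α² > 1/3 if and only if α < −1 or α > 6; in particular, for all α with 2 ≤ α ≤ 5 one has tr σ_α² ≤ tr (σ_α)_A² and tr σ_α² ≤ tr (σ_α)_B². -/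

import Mathlib

open scoped ComplexOrder

noncomputable section

/-- The pure-state density matrix `|Φ⟩⟨Φ|`. -/
def pureMat {α : Type*} (Φ : α → ℂ) : Matrix α α ℂ :=
  Matrix.of fun a b => Φ a * (starRingEnd ℂ) (Φ b)

/-- The standard basis vector `|xy⟩` of `ℂ³ ⊗ ℂ³`. -/
def ket3 (x y : Fin 3) : (Fin 3 × Fin 3) → ℂ := fun a => if a = (x, y) then 1 else 0

/-- The maximally entangled state `ψ₊ = (|00⟩ + |11⟩ + |22⟩)/√3`. -/
def ψp3 : (Fin 3 × Fin 3) → ℂ := fun a => if a.1 = a.2 then (Real.sqrt 3 : ℂ)⁻¹ else 0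

/-- `σ₊ = (|01⟩⟨01| + |12⟩⟨12| + |20⟩⟨20|)/3`. -/
def σplus : Matrix (Fin 3 × Fin 3) (Fin 3 × Fin 3) ℂ :=
  (3 : ℂ)⁻¹ • (pureMat (ket3 0 1) + pureMat (ket3 1 2) + pureMat (ket3 2 0))

/-- `σ₋ = (|10⟩⟨10| + |21⟩⟨21| + |02⟩⟨02|)/3`. -/
def σminus : Matrix (Fin 3 × Fin 3) (Fin 3 × Fin 3) ℂ :=
  (3 : ℂ)⁻¹ • (pureMat (ket3 1 0) + pureMat (ket3 2 1) + pureMat (ket3 0 2))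

/-- The Størmer state `σ_α = (2/7)|ψ₊⟩⟨ψ₊| + (α/7)σ₊ + ((5−α)/7)σ₋`. -/
def stormer (α : ℝ) : Matrix (Fin 3 × Fin 3) (Fin 3 × Fin 3) ℂ :=
  (2 / 7 : ℂ) • pureMat ψp3 + ((α : ℂ) / 7) • σplus + (((5 - α : ℝ) : ℂ) / 7) • σminus

/-- Partial trace over the second factor. -/
def ptA (ρ : Matrix (Fin 3 × Fin 3) (Fin 3 × Fin 3) ℂ) : Matrix (Fin 3) (Fin 3) ℂ :=
  Matrix.of fun x x' => ∑ y : Fin 3, ρ (x, y) (x', y)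

/-- Partial trace over the first factor. -/
def ptB (ρ : Matrix (Fin 3 × Fin 3) (Fin 3 × Fin 3) ℂ) : Matrix (Fin 3) (Fin 3) ℂ :=
  Matrix.of fun y y' => ∑ x : Fin 3, ρ (x, y) (x, y')

/-!
Each of `|ψ₊⟩⟨ψ₊|`, `σ₊`, `σ₋` has both marginals equal to `I₃/3` and the weights `2/7`, `α/7`,
`(5 - α)/7` sum to `1`, so both marginals of `σ_α` are `I₃/3` by linearity of the partial trace.
The three components have mutually orthogonal supports, hence
`tr σ_α² = (2/7)² + (α/7)²/3 + ((5 - α)/7)²/3 = (2α² - 10α + 37)/147`, and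
`147 (tr σ_α² - 1/3) = 2 (α + 1) (α - 6)` settles the comparison with `1/3`.
-/

lemma Complex.inv_ofReal_sqrt_mul_self {x : ℝ} (hx : 0 ≤ x) :
    ((Real.sqrt x : ℂ))⁻¹ * ((Real.sqrt x : ℂ))⁻¹ = (x : ℂ)⁻¹ := by
  rw [← mul_inv, ← Complex.ofReal_mul, Real.mul_self_sqrt hx]

lemma ptA_add (ρ τ : Matrix (Fin 3 × Fin 3) (Fin 3 × Fin 3) ℂ) :
    ptA (ρ + τ) = ptA ρ + ptA τ := by
  ext x x'
  simp [ptA, Finset.sum_add_distrib]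

lemma ptA_smul (c : ℂ) (ρ : Matrix (Fin 3 × Fin 3) (Fin 3 × Fin 3) ℂ) :
    ptA (c • ρ) = c • ptA ρ := by
  ext x x'
  simp [ptA, Finset.mul_sum]

lemma ptB_add (ρ τ : Matrix (Fin 3 × Fin 3) (Fin 3 × Fin 3) ℂ) :
    ptB (ρ + τ) = ptB ρ + ptB τ := by
  ext y y'
  simp [ptB, Finset.sum_add_distrib]

lemma ptB_smul (c : ℂ) (ρ : Matrix (Fin 3 × Fin 3) (Fin 3 × Fin 3) ℂ) :
    ptB (c • ρ) = c • ptB ρ := by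
  ext y y'
  simp [ptB, Finset.mul_sum]

lemma ptA_pureMat_ψp3 : ptA (pureMat ψp3) = (3 : ℂ)⁻¹ • 1 := by
  ext x x'
  fin_cases x <;> fin_cases x' <;>
    simp [ptA, pureMat, ψp3, Complex.inv_ofReal_sqrt_mul_self]

lemma ptB_pureMat_ψp3 : ptB (pureMat ψp3) = (3 : ℂ)⁻¹ • 1 := by
  ext y y'
  fin_cases y <;> fin_cases y' <;>
    simp [ptB, pureMat, ψp3, Complex.inv_ofReal_sqrt_mul_self]

lemma ptA_σplus : ptA σplus = (3 : ℂ)⁻¹ • 1 := by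
  ext x x'
  fin_cases x <;> fin_cases x' <;>
    simp [ptA, σplus, pureMat, ket3, Fin.sum_univ_three]

lemma ptB_σplus : ptB σplus = (3 : ℂ)⁻¹ • 1 := by
  ext y y'
  fin_cases y <;> fin_cases y' <;>
    simp [ptB, σplus, pureMat, ket3, Fin.sum_univ_three]

lemma ptA_σminus : ptA σminus = (3 : ℂ)⁻¹ • 1 := by
  ext x x'
  fin_cases x <;> fin_cases x' <;>
    simp [ptA, σminus, pureMat, ket3, Fin.sum_univ_three]

lemma ptB_σminus : ptB σminus = (3 : ℂ)⁻¹ • 1 := by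
  ext y y'
  fin_cases y <;> fin_cases y' <;>
    simp [ptB, σminus, pureMat, ket3, Fin.sum_univ_three]

lemma stormer_weights_sum (α : ℝ) : (2 / 7 : ℂ) + (α : ℂ) / 7 + ((5 - α : ℝ) : ℂ) / 7 = 1 := by
  push_cast
  ring

lemma ptA_stormer (α : ℝ) : ptA (stormer α) = (3 : ℂ)⁻¹ • 1 := by
  rw [stormer, ptA_add, ptA_add, ptA_smul, ptA_smul, ptA_smul, ptA_pureMat_ψp3, ptA_σplus,
    ptA_σminus, ← add_smul, ← add_smul, stormer_weights_sum, one_smul]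

lemma ptB_stormer (α : ℝ) : ptB (stormer α) = (3 : ℂ)⁻¹ • 1 := by
  rw [stormer, ptB_add, ptB_add, ptB_smul, ptB_smul, ptB_smul, ptB_pureMat_ψp3, ptB_σplus,
    ptB_σminus, ← add_smul, ← add_smul, stormer_weights_sum, one_smul]

lemma stormer_apply (α : ℝ) (a b : Fin 3 × Fin 3) :
    stormer α a b =
      (if a.1 = a.2 ∧ b.1 = b.2 then (2 / 21 : ℂ) else 0)
      + (if a = b ∧ (a = (0, 1) ∨ a = (1, 2) ∨ a = (2, 0)) then (α : ℂ) / 21 else 0)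
      + (if a = b ∧ (a = (1, 0) ∨ a = (2, 1) ∨ a = (0, 2)) then ((5 - α : ℝ) : ℂ) / 21 else 0) := by
  obtain ⟨a1, a2⟩ := a
  obtain ⟨b1, b2⟩ := b
  simp only [stormer, σplus, σminus, pureMat, ket3, ψp3, Matrix.add_apply,
    Matrix.smul_apply, Matrix.of_apply, smul_eq_mul, Prod.mk.injEq]
  fin_cases a1 <;> fin_cases a2 <;> fin_cases b1 <;> fin_cases b2 <;>
    simp [Complex.inv_ofReal_sqrt_mul_self] <;> ring

lemma trace_stormer_sq (α : ℝ) :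
    (stormer α * stormer α).trace = (((2 * α ^ 2 - 10 * α + 37) / 147 : ℝ) : ℂ) := by
  simp [Matrix.trace, Matrix.mul_apply, Fintype.sum_prod_type, Fin.sum_univ_three, stormer_apply]
  ring

lemma third_lt_stormer_purity_iff (α : ℝ) :
    1 / 3 < (2 * α ^ 2 - 10 * α + 37) / 147 ↔ α < -1 ∨ 6 < α := by
  constructor
  · intro h
    by_contra! hc
    nlinarith [hc.1, hc.2]
  · rintro (h | h) <;> nlinarith

lemma stormer_purity_le_third {α : ℝ} (h₁ : -1 ≤ α) (h₆ : α ≤ 6) :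
    (2 * α ^ 2 - 10 * α + 37) / 147 ≤ 1 / 3 := by
  nlinarith

/-- Properties of the Størmer state: (i) both one-qutrit reductions are maximally mixed,
of purity `1/3`; (ii) its purity is `(2α² − 10α + 37)/147`; (iii) the purity exceeds `1/3`
iff `α < −1` or `α > 6`; in particular for `2 ≤ α ≤ 5` the purity-based criterion fails. -/
theorem stormer_properties (α : ℝ) :
    (ptA (stormer α) = (3 : ℂ)⁻¹ • 1 ∧ ptB (stormer α) = (3 : ℂ)⁻¹ • 1 ∧
      (ptA (stormer α) * ptA (stormer α)).trace = (3 : ℂ)⁻¹ ∧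
      (ptB (stormer α) * ptB (stormer α)).trace = (3 : ℂ)⁻¹) ∧
    ((stormer α * stormer α).trace = (((2 * α ^ 2 - 10 * α + 37) / 147 : ℝ) : ℂ)) ∧
    ((1 / 3 : ℂ) < (stormer α * stormer α).trace ↔ α < -1 ∨ 6 < α) ∧
    (2 ≤ α → α ≤ 5 →
      (stormer α * stormer α).trace ≤ (ptA (stormer α) * ptA (stormer α)).trace ∧
      (stormer α * stormer α).trace ≤ (ptB (stormer α) * ptB (stormer α)).trace) := by
  have hmixed : (((3 : ℂ)⁻¹ • (1 : Matrix (Fin 3) (Fin 3) ℂ)) * ((3 : ℂ)⁻¹ • 1)).trace =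
      (3 : ℂ)⁻¹ := by
    simp
  have hthird : (1 / 3 : ℂ) = ((1 / 3 : ℝ) : ℂ) := by norm_num
  rw [ptA_stormer, ptB_stormer, trace_stormer_sq, hmixed, inv_eq_one_div, hthird,
    Complex.real_lt_real, Complex.real_le_real, third_lt_stormer_purity_iff]
  refine ⟨⟨rfl, rfl, rfl, rfl⟩, rfl, Iff.rfl, fun h₂ h₅ => ?_⟩
  have hle := stormer_purity_le_third (α := α) (by linarith) (by linarith)
  exact ⟨hle, hle⟩
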